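/- Consider general groupwise keys: a family 𝒢̄ of subsets of {1,…,K}, mutually independent keys S_𝒢 (𝒢 ∈ 𝒢̄), each uniformly distributed on (ZMod q)^{L_S}, and Z_k = (S_𝒢)_{𝒢∈𝒢̄, k∈𝒢}. Let T ⊆ {1,…,K} and let U_1, U_2 be disjoint nonempty sets with U_1 ∪ U_2 = {1,…,K}\T. If every 𝒢 ∈ 𝒢̄ with 𝒢 ∩ T = ∅ satisfies 𝒢 ⊆ U_1 or 𝒢 ⊆ U_2, then I((Z_k)_{k∈U_1}; (Z_k)_{k∈U_2} | (Z_k)_{k∈T}) = 0. -/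

import Mathlib

open MeasureTheory ProbabilityTheory

/-- Shannon entropy (in natural log units) of a finitely-valued random variable. -/
noncomputable def entr {Ω : Type*} [MeasurableSpace Ω] (μ : Measure Ω)
    {α : Type*} [Fintype α] [MeasurableSpace α] (X : Ω → α) : ℝ :=
  ∑ a : α, Real.negMulLog ((μ.map X) {a}).toReal

/-- Conditional Shannon entropy `H(X | Y)`. -/
noncomputable def condEntr {Ω : Type*} [MeasurableSpace Ω] (μ : Measure Ω)
    {α β : Type*} [Fintype α] [MeasurableSpace α] [Fintype β] [MeasurableSpace β]
    (X : Ω → α) (Y : Ω → β) : ℝ :=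
  entr μ (fun ω => (X ω, Y ω)) - entr μ Y

/-- Conditional mutual information `I(X ; Y | Z)`. -/
noncomputable def condMI {Ω : Type*} [MeasurableSpace Ω] (μ : Measure Ω)
    {α β γ : Type*} [Fintype α] [MeasurableSpace α] [Fintype β] [MeasurableSpace β]
    [Fintype γ] [MeasurableSpace γ] (X : Ω → α) (Y : Ω → β) (Z : Ω → γ) : ℝ :=
  condEntr μ X Z + condEntr μ Y Z - condEntr μ (fun ω => (X ω, Y ω)) Z

/-- A random variable is uniformly distributed on a finite type. -/
def IsUnif {Ω : Type*} [MeasurableSpace Ω] (μ : Measure Ω)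
    {α : Type*} [Fintype α] [MeasurableSpace α] (X : Ω → α) : Prop :=
  ∀ a : α, μ (X ⁻¹' {a}) = (Fintype.card α : ENNReal)⁻¹


/-!
Every observation in sight is a collection of whole keys, so its entropy is
`L_S log q` times the number of groups `𝒢 ∈ 𝒢̄` from which it sees a key, i.e. that meet
the corresponding set of users. The conditional mutual information is therefore
`L_S log q · (N(U₁ ∪ T) + N(U₂ ∪ T) - N(U₁ ∪ U₂ ∪ T) - N(T))`, where `N(W)` counts the
groups meeting `W`. By inclusion–exclusion this vanishes as soon as every group meeting both
`U₁ ∪ T` and `U₂ ∪ T` meets `T`, which is exactly what the splitting hypothesis guarantees.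
-/

section Entropy

variable {Ω : Type*} [MeasurableSpace Ω] {μ : Measure Ω}
  {α β : Type*} [Fintype α] [MeasurableSpace α] [MeasurableSingletonClass α]
  [Fintype β] [MeasurableSpace β] [MeasurableSingletonClass β]

lemma entr_comp_of_injective {X : Ω → α} (hX : Measurable X) {f : α → β}
    (hf : Function.Injective f) : entr μ (fun ω => f (X ω)) = entr μ X := by
  have hfm : Measurable f := measurable_of_countable f
  have hmap : ∀ b, (μ.map (fun ω => f (X ω))) {b} = μ.map X (f ⁻¹' {b}) := fun b => by
    rw [show (fun ω => f (X ω)) = f ∘ X from rfl, ← Measure.map_map hfm hX,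
      Measure.map_apply hfm (measurableSet_singleton b)]
  refine (Fintype.sum_of_injective f hf _ _ (fun b hb => ?_) (fun a => ?_)).symm
  · rw [hmap, Set.preimage_singleton_eq_empty.2 hb]
    simp
  · rw [hmap, ← Set.image_singleton, hf.preimage_image]

lemma entr_eq_log_card [IsProbabilityMeasure μ] {X : Ω → α} (hX : Measurable X)
    (hunif : IsUnif μ X) : entr μ X = Real.log (Fintype.card α) := by
  have : Nonempty α := (nonempty_of_isProbabilityMeasure μ).map X
  have hcard : (0 : ℝ) < Fintype.card α := by exact_mod_cast Fintype.card_pos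
  simp only [entr, Measure.map_apply hX (measurableSet_singleton _), hunif _, Finset.sum_const,
    Finset.card_univ, nsmul_eq_mul, ENNReal.toReal_inv, ENNReal.toReal_natCast,
    Real.negMulLog, Real.log_inv]
  field_simp

lemma isUnif_pi_of_iIndepFun [IsProbabilityMeasure μ] {ι : Type*} [Fintype ι] [DecidableEq ι]
    {S : ι → Ω → α} (hunif : ∀ i, IsUnif μ (S i)) (hind : iIndepFun S μ) :
    IsUnif μ (fun ω i => S i ω) := by
  intro v
  have hset : (fun ω i => S i ω) ⁻¹' {v} = ⋂ i, S i ⁻¹' {v i} := by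
    ext ω
    simp [funext_iff]
  rw [hset, hind.meas_iInter (fun i => ⟨{v i}, measurableSet_singleton _, rfl⟩)]
  simp only [hunif _ _, Finset.prod_const, Finset.card_univ, Fintype.card_fun, Nat.cast_pow,
    ENNReal.inv_pow]

lemma entr_eq_card_mul_log_of_iIndepFun [IsProbabilityMeasure μ] {ι : Type*} [Fintype ι]
    [DecidableEq ι] {S : ι → Ω → α} (hS : ∀ i, Measurable (S i))
    (hunif : ∀ i, IsUnif μ (S i)) (hind : iIndepFun S μ) (P : ι → Prop) [DecidablePred P]
    {F : (ι → α) → β} (hF : ∀ v w, F v = F w ↔ ∀ i, P i → v i = w i) :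
    entr μ (fun ω => F (fun i => S i ω)) =
      Fintype.card {i // P i} * Real.log (Fintype.card α) := by
  obtain ⟨ω₀⟩ := nonempty_of_isProbabilityMeasure μ
  let extend (u : {i // P i} → α) (i : ι) : α := if h : P i then u ⟨i, h⟩ else S i ω₀
  have hextend : ∀ u (i : {i // P i}), extend u i = u i := fun u i => dif_pos i.2
  have hinj : Function.Injective (fun u => F (extend u)) := fun u u' h =>
    funext fun i => by simpa only [hextend] using (hF _ _).1 h i i.2
  have hfactor : (fun ω => F (fun i => S i ω)) = fun ω => F (extend fun i => S i ω) :=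
    funext fun ω => (hF _ _).2 fun i hi => (hextend (fun i => S i ω) ⟨i, hi⟩).symm
  have hunifP : IsUnif μ (fun ω (i : {i // P i}) => S i ω) :=
    isUnif_pi_of_iIndepFun (fun i => hunif i) (hind.precomp Subtype.val_injective)
  have hmeasP : Measurable (fun ω (i : {i // P i}) => S i ω) :=
    measurable_pi_lambda _ fun i => hS i
  rw [hfactor, entr_comp_of_injective hmeasP hinj, entr_eq_log_card hmeasP hunifP,
    Fintype.card_fun, Nat.cast_pow, Real.log_pow]

end Entropy

section GroupwiseKeys

variable {ι κ : Type*} {G : Finset (Finset ι)}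

/-- With `v` the family of all group keys, `keysOf W v` is `(Z_k)_{k ∈ W}`. -/
def keysOf (W : Finset ι) (v : {g // g ∈ G} → κ) :
    ∀ k : {k // k ∈ W}, {g // g ∈ G ∧ k.1 ∈ g} → κ :=
  fun _ g => v ⟨g.1, g.2.1⟩

variable [DecidableEq ι]

lemma keysOf_eq_keysOf_iff (W : Finset ι) (v w : {g // g ∈ G} → κ) :
    keysOf W v = keysOf W w ↔ ∀ g : {g // g ∈ G}, (g.1 ∩ W).Nonempty → v g = w g := by
  constructor
  · rintro h g ⟨k, hk⟩
    rw [Finset.mem_inter] at hk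
    exact congrFun (congrFun h ⟨k, hk.2⟩) ⟨g.1, g.2, hk.1⟩
  · intro h
    funext k g
    exact h ⟨g.1, g.2.1⟩ ⟨k.1, Finset.mem_inter.2 ⟨g.2.2, k.2⟩⟩

lemma forall_inter_nonempty_and_iff {γ : Type*} (s : γ → Finset ι) (p : γ → Prop)
    (A B : Finset ι) :
    ((∀ g, (s g ∩ A).Nonempty → p g) ∧ ∀ g, (s g ∩ B).Nonempty → p g) ↔
      ∀ g, (s g ∩ (A ∪ B)).Nonempty → p g := by
  simp only [Finset.inter_union_distrib_left, Finset.union_nonempty, or_imp, forall_and]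

lemma keysOf_pair_eq_iff (A B : Finset ι) (v w : {g // g ∈ G} → κ) :
    (keysOf A v, keysOf B v) = (keysOf A w, keysOf B w) ↔
      ∀ g : {g // g ∈ G}, (g.1 ∩ (A ∪ B)).Nonempty → v g = w g := by
  rw [Prod.ext_iff, keysOf_eq_keysOf_iff, keysOf_eq_keysOf_iff]
  exact forall_inter_nonempty_and_iff _ _ A B

lemma inter_union_nonempty_and_iff {g T U₁ U₂ : Finset ι} (hdisj : Disjoint U₁ U₂)
    (hsplit : g ∩ T = ∅ → g ⊆ U₁ ∨ g ⊆ U₂) :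
    (g ∩ (U₁ ∪ T)).Nonempty ∧ (g ∩ (U₂ ∪ T)).Nonempty ↔ (g ∩ T).Nonempty := by
  refine ⟨fun ⟨h₁, h₂⟩ => ?_, fun h => ⟨h.mono ?_, h.mono ?_⟩⟩
  · by_contra hT
    rw [Finset.not_nonempty_iff_eq_empty] at hT
    rw [Finset.inter_union_distrib_left, hT, Finset.union_empty] at h₁ h₂
    rcases hsplit hT with hsub | hsub
    · exact h₂.ne_empty (Finset.disjoint_iff_inter_eq_empty.1 (hdisj.mono_left hsub))
    · exact h₁.ne_empty (Finset.disjoint_iff_inter_eq_empty.1 (hdisj.symm.mono_left hsub))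
  all_goals exact Finset.inter_subset_inter_left Finset.subset_union_right

lemma card_meeting_add_card_meeting_eq {T U₁ U₂ : Finset ι} (hdisj : Disjoint U₁ U₂)
    (hsplit : ∀ g ∈ G, g ∩ T = ∅ → g ⊆ U₁ ∨ g ⊆ U₂) :
    Fintype.card {g : {g // g ∈ G} // (g.1 ∩ (U₁ ∪ T)).Nonempty} +
        Fintype.card {g : {g // g ∈ G} // (g.1 ∩ (U₂ ∪ T)).Nonempty} =
      Fintype.card {g : {g // g ∈ G} // (g.1 ∩ (U₁ ∪ U₂ ∪ T)).Nonempty} +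
        Fintype.card {g : {g // g ∈ G} // (g.1 ∩ T).Nonempty} := by
  simp only [Fintype.card_subtype]
  rw [← Finset.card_union_add_card_inter, ← Finset.filter_or, ← Finset.filter_and]
  congr 2
  · ext g
    simp only [Finset.mem_filter, Finset.mem_univ, true_and, Finset.inter_union_distrib_left,
      Finset.union_nonempty]
    tauto
  · ext g
    simp only [Finset.mem_filter, Finset.mem_univ, true_and]
    exact inter_union_nonempty_and_iff hdisj (hsplit g g.2)

end GroupwiseKeys

theorem stmt16_general
    (q K LS : ℕ) [NeZero q]
    {Ω : Type*} [MeasurableSpace Ω] (μ : Measure Ω) [IsProbabilityMeasure μ]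
    (Gbar : Finset (Finset (Fin K)))
    (S : {g : Finset (Fin K) // g ∈ Gbar} → Ω → (Fin LS → ZMod q))
    (hSmeas : ∀ g, Measurable (S g))
    (hSunif : ∀ g, IsUnif μ (S g))
    (hSindep : iIndepFun S μ)
    (T : Finset (Fin K))
    (U1 U2 : Finset (Fin K))
    (hdisj : Disjoint U1 U2)
    (hsplit : ∀ g ∈ Gbar, g ∩ T = ∅ → g ⊆ U1 ∨ g ⊆ U2) :
    condMI μ
      (fun ω => fun k : {k : Fin K // k ∈ U1} =>
        fun g : {g : Finset (Fin K) // g ∈ Gbar ∧ k.1 ∈ g} => S ⟨g.1, g.2.1⟩ ω)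
      (fun ω => fun k : {k : Fin K // k ∈ U2} =>
        fun g : {g : Finset (Fin K) // g ∈ Gbar ∧ k.1 ∈ g} => S ⟨g.1, g.2.1⟩ ω)
      (fun ω => fun k : {k : Fin K // k ∈ T} =>
        fun g : {g : Finset (Fin K) // g ∈ Gbar ∧ k.1 ∈ g} => S ⟨g.1, g.2.1⟩ ω) = 0 := by
  have hZ := entr_eq_card_mul_log_of_iIndepFun hSmeas hSunif hSindep _
    (keysOf_eq_keysOf_iff T)
  have hXZ := entr_eq_card_mul_log_of_iIndepFun hSmeas hSunif hSindep _
    (keysOf_pair_eq_iff U1 T)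
  have hYZ := entr_eq_card_mul_log_of_iIndepFun hSmeas hSunif hSindep _
    (keysOf_pair_eq_iff U2 T)
  have hXYZ := entr_eq_card_mul_log_of_iIndepFun hSmeas hSunif hSindep
    (fun g => (g.1 ∩ (U1 ∪ U2 ∪ T)).Nonempty)
    (F := fun v => ((keysOf U1 v, keysOf U2 v), keysOf T v)) fun v w => by
      rw [Prod.ext_iff, keysOf_pair_eq_iff, keysOf_eq_keysOf_iff]
      exact forall_inter_nonempty_and_iff _ _ (U1 ∪ U2) T
  have hcount := card_meeting_add_card_meeting_eq (G := Gbar) hdisj hsplit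
  change condMI μ (fun ω => keysOf U1 fun g => S g ω) (fun ω => keysOf U2 fun g => S g ω)
    (fun ω => keysOf T fun g => S g ω) = 0
  rw [condMI, condEntr, condEntr, condEntr, hZ, hXZ, hYZ, hXYZ]
  rify at hcount
  linear_combination Real.log (Fintype.card (Fin LS → ZMod q)) * hcount

/-- for general groupwise keys, if every key group avoiding the colluding
set `T` lies entirely inside `U_1` or entirely inside `U_2` (where `U_1, U_2` partition
`[K]∖T`), then `I((Z_k)_{k∈U_1} ; (Z_k)_{k∈U_2} | (Z_k)_{k∈T}) = 0`. -/
theorem stmt16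
    (q K LS : ℕ) [NeZero q] (hq : IsPrimePow q) (hK : 2 ≤ K)
    {Ω : Type*} [MeasurableSpace Ω] (μ : Measure Ω) [IsProbabilityMeasure μ]
    (Gbar : Finset (Finset (Fin K)))
    (S : {g : Finset (Fin K) // g ∈ Gbar} → Ω → (Fin LS → ZMod q))
    (hSmeas : ∀ g, Measurable (S g))
    (hSunif : ∀ g, IsUnif μ (S g))
    (hSindep : iIndepFun S μ)
    (T : Finset (Fin K))
    (U1 U2 : Finset (Fin K)) (hU1 : U1.Nonempty) (hU2 : U2.Nonempty)
    (hdisj : Disjoint U1 U2) (hunion : U1 ∪ U2 = Tᶜ)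
    (hsplit : ∀ g ∈ Gbar, g ∩ T = ∅ → g ⊆ U1 ∨ g ⊆ U2) :
    condMI μ
      (fun ω => fun k : {k : Fin K // k ∈ U1} =>
        fun g : {g : Finset (Fin K) // g ∈ Gbar ∧ k.1 ∈ g} => S ⟨g.1, g.2.1⟩ ω)
      (fun ω => fun k : {k : Fin K // k ∈ U2} =>
        fun g : {g : Finset (Fin K) // g ∈ Gbar ∧ k.1 ∈ g} => S ⟨g.1, g.2.1⟩ ω)
      (fun ω => fun k : {k : Fin K // k ∈ T} =>
        fun g : {g : Finset (Fin K) // g ∈ Gbar ∧ k.1 ∈ g} => S ⟨g.1, g.2.1⟩ ω) = 0 :=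
  stmt16_general q K LS μ Gbar S hSmeas hSunif hSindep T U1 U2 hdisj hsplit
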